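/- arXiv:1201.6644 — 7 statements merged into one kernel-verified Lean document; each statement's English description precedes it below -/
import Mathlib

section
/- Let k be a field and r a positive integer. For any matrices A, B ∈ GL_r(k) satisfying A⁴ = id and (AB)³ = A², there exists a unique group homomorphism ρ : SL₂(ℤ) → GL_r(k) such that ρ(𝔰) = A and ρ(𝔱) = B. -/
/-!
The group `P = ⟨s, t | s⁴ = 1, (st)³ = s²⟩` maps onto `SL(2, ℤ)` by `s ↦ 𝔰`, `t ↦ 𝔱`, because
`𝔰` and `𝔱` generate `SL(2, ℤ)`; once this map is known to be injective, the universal property of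
`P` gives existence and generation gives uniqueness.

For injectivity: `s² = (st)³` is central in `P`, and `P / ⟨s²⟩` is generated by the images of `s`
and `st`, of orders dividing `2` and `3`, so it is a quotient of `C₂ * C₃`. On the upper half
plane `𝔰` maps `Re z < 0` into `Re z > 0`, while `𝔰𝔱` and `(𝔰𝔱)²` map `Re z > 0` into `Re z < 0`,
so by ping-pong `C₂ * C₃`, and hence `P / ⟨s²⟩`, acts faithfully. The kernel of `P → SL(2, ℤ)`
thus lies in `{1, s²}`, and `s²` maps to `-1`.
-/

open Matrix
open Subgroup Monoid MatrixGroups ModularGroup UpperHalfPlane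
open scoped Pointwise

namespace MonoidHom

variable {G : Type*} [Monoid G]

def ofPowEqOne (n : ℕ) [NeZero n] (g : G) (hg : g ^ n = 1) : Multiplicative (ZMod n) →* G where
  toFun x := g ^ x.toAdd.val
  map_one' := by simp
  map_mul' x y := by
    rw [toAdd_mul, ZMod.val_add, ← pow_eq_pow_mod _ hg, pow_add]

end MonoidHom

lemma Subgroup.normal_of_le_center {G : Type*} [Group G] {H : Subgroup G} (h : H ≤ center G) :
    H.Normal :=
  ⟨fun n hn g => by rw [mem_center_iff.1 (h hn) g, mul_inv_cancel_right]; exact hn⟩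

lemma Subgroup.closure_pair_mul_right {G : Type*} [Group G] (a b : G) :
    closure {a, a * b} = closure {a, b} := by
  have ha : a ∈ closure {a, b} := subset_closure (Set.mem_insert _ _)
  have hb : b ∈ closure {a, b} := subset_closure (Set.mem_insert_of_mem _ rfl)
  have ha' : a ∈ closure {a, a * b} := subset_closure (Set.mem_insert _ _)
  have hab' : a * b ∈ closure {a, a * b} := subset_closure (Set.mem_insert_of_mem _ rfl)
  refine le_antisymm (closure_le _ |>.2 ?_) (closure_le _ |>.2 ?_) <;> rintro _ (rfl | rfl)
  exacts [ha, mul_mem ha hb, ha', by simpa using mul_mem (inv_mem ha') hab']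

lemma MonoidHom.injective_of_ker_le_zpowers {G H : Type*} [Group G] [Group H] {φ : G →* H}
    {z : G} (hz : z ^ 2 = 1) (hφz : φ z ≠ 1) (hker : φ.ker ≤ zpowers z) : Function.Injective φ := by
  refine (injective_iff_map_eq_one φ).2 fun p hp => ?_
  obtain ⟨n, rfl⟩ := mem_zpowers_iff.1 (hker hp)
  rw [zpow_eq_zpow_emod' n hz, Nat.cast_ofNat] at hp ⊢
  rcases Int.emod_two_eq_zero_or_one n with h | h <;> rw [h] at hp ⊢
  · exact zpow_zero z
  · exact absurd (by simpa using hp) hφz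

/-- `CoprodI C2C3` is `C₂ * C₃`, with `C₂` at `true` and `C₃` at `false`. -/
abbrev C2C3 : Bool → Type := fun i => Multiplicative (ZMod (cond i 2 3))

namespace C2C3

open MonoidHom

variable {G H : Type*} [Group G] [Group H] {a b : G} (ha : a ^ 2 = 1) (hb : b ^ 3 = 1)

def lift : CoprodI C2C3 →* G :=
  CoprodI.lift fun
    | true => ofPowEqOne 2 a ha
    | false => ofPowEqOne 3 b hb

lemma lift_of_true (x : C2C3 true) : lift ha hb (CoprodI.of x) = a ^ x.toAdd.val :=
  CoprodI.lift_of _ x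

lemma lift_of_false (x : C2C3 false) : lift ha hb (CoprodI.of x) = b ^ x.toAdd.val :=
  CoprodI.lift_of _ x

lemma comp_lift (φ : G →* H) :
    φ.comp (lift ha hb) =
      lift (a := φ a) (b := φ b) (by rw [← map_pow, ha, map_one])
        (by rw [← map_pow, hb, map_one]) := by
  refine CoprodI.ext_hom _ _ fun i => MonoidHom.ext fun x => ?_
  cases i
  · simp only [MonoidHom.comp_apply, lift_of_false, map_pow]
  · simp only [MonoidHom.comp_apply, lift_of_true, map_pow]

lemma lift_surjective (h : closure {a, b} = ⊤) : Function.Surjective (lift ha hb) := by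
  rw [← MonoidHom.range_eq_top, eq_top_iff, ← h, closure_le]
  rintro _ (rfl | rfl)
  · exact ⟨CoprodI.of (i := true) (.ofAdd 1), by rw [lift_of_true]; exact pow_one _⟩
  · exact ⟨CoprodI.of (i := false) (.ofAdd 1), by rw [lift_of_false]; exact pow_one _⟩

theorem lift_injective_of_ping_pong {α : Type*} [MulAction G α] {X Y : Set α}
    (hX : X.Nonempty) (hY : Y.Nonempty) (hXY : Disjoint X Y)
    (haY : a • Y ⊆ X) (hbX : b • X ⊆ Y) (hb2X : b ^ 2 • X ⊆ Y) :
    Function.Injective (lift ha hb) := by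
  refine CoprodI.lift_injective_of_ping_pong _ (.inr ⟨false, ?_⟩) (fun i => cond i X Y)
    (fun i => by cases i <;> assumption) ?_ ?_
  · simp [Cardinal.mk_fintype]
  · rintro (_ | _) (_ | _) hij
    exacts [absurd rfl hij, hXY.symm, hXY, absurd rfl hij]
  · rintro (_ | _) (_ | _) hij x hx
    · exact absurd rfl hij
    · have hx' : x.toAdd ≠ 0 := by simpa using hx
      have hval : x.toAdd.val = 1 ∨ x.toAdd.val = 2 :=
        (by decide : ∀ y : ZMod 3, y ≠ 0 → y.val = 1 ∨ y.val = 2) _ hx'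
      change b ^ x.toAdd.val • X ⊆ Y
      rcases hval with h | h <;> rw [h]
      · rwa [pow_one]
      · exact hb2X
    · have hx' : x.toAdd ≠ 0 := by simpa using hx
      have hval : x.toAdd.val = 1 := (by decide : ∀ y : ZMod 2, y ≠ 0 → y.val = 1) _ hx'
      change a ^ x.toAdd.val • Y ⊆ X
      rwa [hval, pow_one]
    · exact absurd rfl hij

end C2C3

namespace ModularGroup

lemma S_pow_four : S ^ 4 = 1 := by decide

lemma S_mul_T_pow_three : (S * T) ^ 3 = S ^ 2 := by decide

lemma S_sq : S ^ 2 = -1 := by decide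

lemma S_mul_T_sq : (S * T) ^ 2 = T⁻¹ * S := by decide

lemma re_S_smul (z : ℍ) : (S • z).re = -z.re / Complex.normSq z := by
  rw [modular_S_smul, ← coe_re, coe_mk, Complex.inv_re, Complex.neg_re, Complex.normSq_neg]
  rfl

lemma re_S_smul_pos {z : ℍ} (hz : z.re < 0) : 0 < (S • z).re := by
  rw [re_S_smul]
  exact div_pos (neg_pos.2 hz) (normSq_pos z)

lemma re_S_smul_neg {z : ℍ} (hz : 0 < z.re) : (S • z).re < 0 := by
  rw [re_S_smul]
  exact div_neg_of_neg_of_pos (neg_neg_of_pos hz) (normSq_pos z)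

lemma re_S_mul_T_smul_neg {z : ℍ} (hz : 0 < z.re) : ((S * T) • z).re < 0 := by
  rw [mul_smul]
  exact re_S_smul_neg (by rw [re_T_smul]; linarith)

lemma re_S_mul_T_sq_smul_neg {z : ℍ} (hz : 0 < z.re) : ((S * T) ^ 2 • z).re < 0 := by
  rw [S_mul_T_sq, mul_smul, re_T_inv_smul]
  linarith [re_S_smul_neg hz]

/-- The relators of `⟨s, t | s⁴ = 1, (st)³ = s²⟩`, where `s = of true` and `t = of false`. -/
def relators : Set (FreeGroup Bool) :=
  {.of true ^ 4, (.of true * .of false) ^ 3 * (.of true ^ 2)⁻¹}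

abbrev Presented : Type := PresentedGroup relators

namespace Presented

def s : Presented := PresentedGroup.of true

def t : Presented := PresentedGroup.of false

lemma s_pow_four : s ^ 4 = 1 :=
  PresentedGroup.one_of_mem (rels := relators) (Set.mem_insert _ _)

lemma s_mul_t_pow_three : (s * t) ^ 3 = s ^ 2 :=
  mul_inv_eq_one.1 (PresentedGroup.one_of_mem (rels := relators) (Set.mem_insert_of_mem _ rfl))

lemma closure_s_t : closure {s, t} = ⊤ := by
  rw [← PresentedGroup.closure_range_of relators]
  congr 1
  ext
  simp [s, t, or_comm]

variable {G : Type*} [Group G] {a b : G}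

def lift (ha : a ^ 4 = 1) (hab : (a * b) ^ 3 = a ^ 2) : Presented →* G :=
  PresentedGroup.toGroup (f := fun i => cond i a b) <| by
    rintro _ (rfl | rfl)
    · simpa using ha
    · simpa [mul_inv_eq_one] using hab

variable (ha : a ^ 4 = 1) (hab : (a * b) ^ 3 = a ^ 2)

@[simp] lemma lift_s : lift ha hab s = a := PresentedGroup.toGroup.of _

@[simp] lemma lift_t : lift ha hab t = b := PresentedGroup.toGroup.of _

def toSL : Presented →* SL(2, ℤ) := lift S_pow_four S_mul_T_pow_three

@[simp] lemma toSL_s : toSL s = S := lift_s _ _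

@[simp] lemma toSL_t : toSL t = T := lift_t _ _

lemma toSL_surjective : Function.Surjective toSL := by
  rw [← MonoidHom.range_eq_top, eq_top_iff, ← SpecialLinearGroup.SL2Z_generators, closure_le]
  rintro _ (rfl | rfl)
  exacts [⟨s, toSL_s⟩, ⟨t, toSL_t⟩]

lemma s_sq_mem_center : s ^ 2 ∈ center Presented := by
  suffices h : centralizer {s ^ 2} = ⊤ from centralizer_eq_top_iff_subset.1 h rfl
  rw [eq_top_iff, ← closure_s_t, closure_le]
  have hs : Commute (s ^ 2) s := (Commute.refl s).pow_left 2
  have hst : Commute (s ^ 2) (s * t) := s_mul_t_pow_three ▸ (Commute.refl _).pow_left 3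
  rintro _ (rfl | rfl) _ rfl
  · exact hs.eq
  · simpa using (hs.inv_right.mul_right hst).eq

instance : (zpowers (s ^ 2)).Normal :=
  normal_of_le_center (zpowers_le.2 s_sq_mem_center)

noncomputable def quotientToPerm : Presented ⧸ zpowers (s ^ 2) →* Equiv.Perm ℍ :=
  QuotientGroup.lift _ ((MulAction.toPermHom SL(2, ℤ) ℍ).comp toSL) <| zpowers_le.2 <| by
    refine Equiv.ext fun z => ?_
    change toSL (s ^ 2) • z = z
    rw [map_pow, toSL_s, S_sq, SL_neg_smul, one_smul]

lemma quotientToPerm_mk_smul (p : Presented) (z : ℍ) :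
    quotientToPerm p • z = toSL p • z :=
  rfl

lemma closure_mk_s_mk_s_mul_t :
    closure {(s : Presented ⧸ zpowers (s ^ 2)), ↑(s * t)} = ⊤ := by
  rw [QuotientGroup.mk_mul, closure_pair_mul_right, ← Set.image_pair, ← QuotientGroup.coe_mk',
    ← MonoidHom.map_closure, closure_s_t, map_top_of_surjective _ (QuotientGroup.mk'_surjective _)]

lemma quotientToPerm_injective : Function.Injective quotientToPerm := by
  have hs : (s : Presented ⧸ zpowers (s ^ 2)) ^ 2 = 1 := by
    rw [← QuotientGroup.mk_pow, QuotientGroup.eq_one_iff]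
    exact mem_zpowers _
  have hst : ((s * t : Presented) : Presented ⧸ zpowers (s ^ 2)) ^ 3 = 1 := by
    rw [← QuotientGroup.mk_pow, QuotientGroup.eq_one_iff, s_mul_t_pow_three]
    exact mem_zpowers _
  refine .of_comp_right (g := C2C3.lift hs hst) ?_
    (C2C3.lift_surjective hs hst closure_mk_s_mk_s_mul_t)
  rw [← MonoidHom.coe_comp, C2C3.comp_lift]
  refine C2C3.lift_injective_of_ping_pong _ _ (X := {z : ℍ | 0 < z.re}) (Y := {z : ℍ | z.re < 0})
    ⟨T • I, by rw [Set.mem_ofPred_eq, re_T_smul, I_re]; norm_num⟩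
    ⟨T⁻¹ • I, by rw [Set.mem_ofPred_eq, re_T_inv_smul, I_re]; norm_num⟩ ?_ ?_ ?_ ?_
  · exact Set.disjoint_left.2 fun z (hX : 0 < z.re) (hY : z.re < 0) => lt_asymm hX hY
  all_goals refine Set.smul_set_subset_iff.2 fun z hz => ?_
  · rw [quotientToPerm_mk_smul, toSL_s]
    exact re_S_smul_pos hz
  · rw [quotientToPerm_mk_smul, map_mul, toSL_s, toSL_t]
    exact re_S_mul_T_smul_neg hz
  · rw [← map_pow, ← QuotientGroup.mk_pow, quotientToPerm_mk_smul, map_pow, map_mul, toSL_s,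
      toSL_t]
    exact re_S_mul_T_sq_smul_neg hz

lemma ker_toSL_le : toSL.ker ≤ zpowers (s ^ 2) := fun p hp => by
  rw [← QuotientGroup.eq_one_iff]
  refine quotientToPerm_injective (Equiv.ext fun z => ?_)
  change quotientToPerm p • z = quotientToPerm 1 • z
  rw [quotientToPerm_mk_smul, MonoidHom.mem_ker.1 hp, map_one, one_smul, one_smul]

lemma toSL_injective : Function.Injective toSL := by
  refine MonoidHom.injective_of_ker_le_zpowers (z := s ^ 2) ?_ ?_ ker_toSL_le
  · rw [← pow_mul, s_pow_four]
  · rw [map_pow, toSL_s, S_sq]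
    decide

noncomputable def mulEquivSL : Presented ≃* SL(2, ℤ) :=
  .ofBijective toSL ⟨toSL_injective, toSL_surjective⟩

end Presented

open Presented in
theorem existsUnique_monoidHom_map_S_map_T {G : Type*} [Group G] {a b : G} (ha : a ^ 4 = 1)
    (hab : (a * b) ^ 3 = a ^ 2) : ∃! ρ : SL(2, ℤ) →* G, ρ S = a ∧ ρ T = b := by
  have hS : mulEquivSL.symm S = s := mulEquivSL.symm_apply_eq.2 toSL_s.symm
  have hT : mulEquivSL.symm T = t := mulEquivSL.symm_apply_eq.2 toSL_t.symm
  refine ⟨(lift ha hab).comp mulEquivSL.symm.toMonoidHom, by simp [hS, hT], ?_⟩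
  rintro ρ ⟨hρS, hρT⟩
  refine MonoidHom.eq_of_eqOn_dense SpecialLinearGroup.SL2Z_generators ?_
  rintro _ (rfl | rfl) <;> simp [hS, hT, hρS, hρT]

end ModularGroup

theorem exists_unique_hom_of_relations_general (k : Type) [Field k] (r : ℕ)
    (A B : GL (Fin r) k) (hA : A ^ 4 = 1) (hAB : (A * B) ^ 3 = A ^ 2) :
    ∃! ρ : SpecialLinearGroup (Fin 2) ℤ →* GL (Fin r) k,
      ρ ModularGroup.S = A ∧ ρ ModularGroup.T = B :=
  ModularGroup.existsUnique_monoidHom_map_S_map_T hA hAB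

/-- For matrices `A, B ∈ GL_r(k)` with `A⁴ = 1` and `(AB)³ = A²`, there is a unique group
homomorphism `ρ : SL₂(ℤ) → GL_r(k)` with `ρ(𝔰) = A` and `ρ(𝔱) = B`. -/
theorem exists_unique_hom_of_relations (k : Type) [Field k] (r : ℕ) (hr : 0 < r)
    (A B : GL (Fin r) k) (hA : A ^ 4 = 1) (hAB : (A * B) ^ 3 = A ^ 2) :
    ∃! ρ : SpecialLinearGroup (Fin 2) ℤ →* GL (Fin r) k,
      ρ ModularGroup.S = A ∧ ρ ModularGroup.T = B :=
  exists_unique_hom_of_relations_general k r A B hA hAB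
end

section
/- Let k be a field of characteristic zero. For any x ∈ k with x¹² = 1, there exists a unique group homomorphism χ_x : SL₂(ℤ) → kˣ such that χ_x(𝔰) = x⁻³ and χ_x(𝔱) = x. Moreover, Γ(12) is contained in the kernel of χ_x. -/
/-!
Uniqueness holds because `SL₂(ℤ)` is generated by `S` and `T`. For existence, note that the
abelianisation of `SL₂(ℤ)` is `ℤ/12`, and that it factors through
`SL₂(ℤ/12) ≅ SL₂(ℤ/3) × SL₂(ℤ/4)`, whose abelianisations are `ℤ/3` and `ℤ/4`. These two characters
are written down as polynomials in the matrix entries, and their multiplicativity is checked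
exhaustively over the finite rings. Then `χ_x(A) = x ^ (4 ε₃(A) + 9 ε₄(A))` is well defined
because `x ^ 4` has order dividing 3 and `x ^ 9` has order dividing 4. By construction it factors
through reduction mod 12.
-/

open Matrix ModularGroup

namespace Matrix.SpecialLinearGroup

variable {R M : Type*} [CommRing R] [AddGroup M]

local notation:1024 "↑ₘ" A:1024 =>
  ((A : SpecialLinearGroup (Fin 2) R) : Matrix (Fin 2) (Fin 2) R)

def homOfEntries (F : R → R → R → R → M)
    -- quantifying over `e f g h` only after the determinant condition on `a b c d` keeps
    -- `decide` fast on finite rings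
    (hF : ∀ a b c d : R, a * d - b * c = 1 → ∀ e f g h : R, e * h - f * g = 1 →
      F (a * e + b * g) (a * f + b * h) (c * e + d * g) (c * f + d * h) = F a b c d + F e f g h) :
    SpecialLinearGroup (Fin 2) R →* Multiplicative M :=
  MonoidHom.mk' (fun A ↦ .ofAdd (F (↑ₘA 0 0) (↑ₘA 0 1) (↑ₘA 1 0) (↑ₘA 1 1))) fun A B ↦ by
    have hdet (A : SpecialLinearGroup (Fin 2) R) : ↑ₘA 0 0 * ↑ₘA 1 1 - ↑ₘA 0 1 * ↑ₘA 1 0 = 1 := by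
      rw [← det_fin_two, A.det_coe]
    simp only [coe_mul, mul_apply, Fin.sum_univ_two]
    exact hF _ _ _ _ (hdet A) _ _ _ _ (hdet B)

lemma ker_map_intCast_le {ι : Type*} [Fintype ι] [DecidableEq ι] {m n : ℕ} (h : m ∣ n) :
    (map (Int.castRingHom (ZMod n)) : SpecialLinearGroup ι ℤ →* _).ker ≤
      (map (Int.castRingHom (ZMod m))).ker := by
  intro A hA
  rw [MonoidHom.mem_ker] at hA ⊢
  have hfactor : map (Int.castRingHom (ZMod m)) A =
      map (ZMod.castHom h (ZMod m)) (map (Int.castRingHom (ZMod n)) A) := by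
    ext i j
    simp
  rw [hfactor, hA, map_one]

end Matrix.SpecialLinearGroup

@[simps]
def ZMod.powHom {G : Type*} [Monoid G] {n : ℕ} [NeZero n] (g : G) (hg : g ^ n = 1) :
    Multiplicative (ZMod n) →* G where
  toFun a := g ^ a.toAdd.val
  map_one' := by simp
  map_mul' a b := by rw [toAdd_mul, ZMod.val_add, ← pow_eq_pow_mod _ hg, pow_add]

/- Generators of `Hom(SL₂(ℤ/3), ℤ/3)` and `Hom(SL₂(ℤ/4), ℤ/4)`, taking the values `0, 1` and
`1, 1` on the images of `S, T`; the polynomials were found by interpolation. -/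
def sl2CharModThree : SpecialLinearGroup (Fin 2) (ZMod 3) →* Multiplicative (ZMod 3) :=
  SpecialLinearGroup.homOfEntries (fun a b c d ↦ a * c + b * d + c * d + 2 * b * c ^ 2 * d)
    (by decide)

def sl2CharModFour : SpecialLinearGroup (Fin 2) (ZMod 4) →* Multiplicative (ZMod 4) :=
  SpecialLinearGroup.homOfEntries
    (fun a b c d ↦ 1 + 3 * d + 2 * c + b * d + b * c + b * c * d + b * c ^ 2 + a * c) (by decide)

section

variable {G : Type*} [CommGroup G] (u : G) (hu : u ^ 12 = 1)

def sl2zCharacter : SpecialLinearGroup (Fin 2) ℤ →* G :=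
  (ZMod.powHom (u ^ 4) (by rw [← pow_mul]; exact hu)).comp
      (sl2CharModThree.comp (SpecialLinearGroup.map (Int.castRingHom (ZMod 3)))) *
    (ZMod.powHom (u ^ 9) (by rw [← pow_mul, show 9 * 4 = 12 * 3 by rfl, pow_mul, hu, one_pow])).comp
      (sl2CharModFour.comp (SpecialLinearGroup.map (Int.castRingHom (ZMod 4))))

lemma sl2zCharacter_S : sl2zCharacter u hu S = (u ^ 3)⁻¹ := by
  have h3 : (sl2CharModThree (SpecialLinearGroup.map (Int.castRingHom (ZMod 3)) S)).toAdd.val = 0 :=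
    by decide
  have h4 : (sl2CharModFour (SpecialLinearGroup.map (Int.castRingHom (ZMod 4)) S)).toAdd.val = 1 :=
    by decide
  simp only [sl2zCharacter, MonoidHom.mul_apply, MonoidHom.comp_apply, ZMod.powHom_apply, h3, h4,
    pow_zero, pow_one, one_mul]
  refine eq_inv_of_mul_eq_one_left ?_
  rw [← pow_add]
  exact hu

lemma sl2zCharacter_T : sl2zCharacter u hu T = u := by
  have h3 : (sl2CharModThree (SpecialLinearGroup.map (Int.castRingHom (ZMod 3)) T)).toAdd.val = 1 :=
    by decide
  have h4 : (sl2CharModFour (SpecialLinearGroup.map (Int.castRingHom (ZMod 4)) T)).toAdd.val = 1 :=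
    by decide
  simp only [sl2zCharacter, MonoidHom.mul_apply, MonoidHom.comp_apply, ZMod.powHom_apply, h3, h4,
    pow_one]
  rw [← pow_add, pow_succ, hu, one_mul]

lemma ker_map_intCast_le_ker_sl2zCharacter :
    (SpecialLinearGroup.map (Int.castRingHom (ZMod 12))).ker ≤ (sl2zCharacter u hu).ker := by
  intro A hA
  have h3 := SpecialLinearGroup.ker_map_intCast_le (by norm_num : 3 ∣ 12) hA
  have h4 := SpecialLinearGroup.ker_map_intCast_le (by norm_num : 4 ∣ 12) hA
  rw [MonoidHom.mem_ker] at h3 h4 ⊢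
  simp [sl2zCharacter, h3, h4]

end

lemma ModularGroup.monoidHom_ext {M : Type*} [Monoid M]
    {χ₁ χ₂ : SpecialLinearGroup (Fin 2) ℤ →* M} (hS : χ₁ S = χ₂ S) (hT : χ₁ T = χ₂ T) : χ₁ = χ₂ :=
  MonoidHom.eq_of_eqOn_dense SpecialLinearGroup.SL2Z_generators (by
    rintro _ (rfl | rfl)
    exacts [hS, hT])

theorem exists_unique_character_chi_general (k : Type) [Field k]
    (x : k) (hx : x ^ 12 = 1) :
    (∃! χ : SpecialLinearGroup (Fin 2) ℤ →* kˣ,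
        (χ ModularGroup.S : k) = (x ^ 3)⁻¹ ∧ (χ ModularGroup.T : k) = x) ∧
    (∀ χ : SpecialLinearGroup (Fin 2) ℤ →* kˣ,
        (χ ModularGroup.S : k) = (x ^ 3)⁻¹ → (χ ModularGroup.T : k) = x →
        (SpecialLinearGroup.map (Int.castRingHom (ZMod 12))).ker ≤ χ.ker) := by
  set u : kˣ := Units.ofPowEqOne x 12 hx (by norm_num)
  have hu : u ^ 12 = 1 := Units.pow_ofPowEqOne hx _
  have hS : ((sl2zCharacter u hu S : kˣ) : k) = (x ^ 3)⁻¹ := by simp [sl2zCharacter_S, u]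
  have hT : ((sl2zCharacter u hu T : kˣ) : k) = x := by simp [sl2zCharacter_T, u]
  have hχ (χ : SpecialLinearGroup (Fin 2) ℤ →* kˣ) :
      ((χ S : k) = (x ^ 3)⁻¹ ∧ (χ T : k) = x) ↔ χ = sl2zCharacter u hu := by
    refine ⟨fun h ↦ ?_, fun h ↦ h ▸ ⟨hS, hT⟩⟩
    exact ModularGroup.monoidHom_ext (Units.ext (h.1.trans hS.symm)) (Units.ext (h.2.trans hT.symm))
  refine ⟨⟨sl2zCharacter u hu, (hχ _).2 rfl, fun χ h ↦ (hχ χ).1 h⟩, fun χ hχS hχT ↦ ?_⟩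
  rw [(hχ χ).1 ⟨hχS, hχT⟩]
  exact ker_map_intCast_le_ker_sl2zCharacter u hu

/-- For `x ∈ k` with `x¹² = 1` there is a unique group homomorphism
`χ_x : SL₂(ℤ) → kˣ` with `χ_x(𝔰) = x⁻³` and `χ_x(𝔱) = x`; moreover `Γ(12)`, the kernel of
reduction mod 12, is contained in the kernel of `χ_x`. -/
theorem exists_unique_character_chi (k : Type) [Field k] [CharZero k]
    (x : k) (hx : x ^ 12 = 1) :
    (∃! χ : SpecialLinearGroup (Fin 2) ℤ →* kˣ,
        (χ ModularGroup.S : k) = (x ^ 3)⁻¹ ∧ (χ ModularGroup.T : k) = x) ∧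
    (∀ χ : SpecialLinearGroup (Fin 2) ℤ →* kˣ,
        (χ ModularGroup.S : k) = (x ^ 3)⁻¹ → (χ ModularGroup.T : k) = x →
        (SpecialLinearGroup.map (Int.castRingHom (ZMod 12))).ker ≤ χ.ker) :=
  exists_unique_character_chi_general k x hx
end

section
/- Let k be an algebraically closed field of characteristic zero, r a positive integer, and ρ̄ : SL₂(ℤ) → PGL_r(k) a projective representation whose kernel is a congruence subgroup of level n. Let ρ̄_n : SL₂(ℤ/nℤ) → PGL_r(k) be the unique projective representation with ρ̄ = ρ̄_n ∘ π_n. Then ρ̄_n lifts to a group homomorphism SL₂(ℤ/nℤ) → GL_r(k) if, and only if, ρ̄ admits a lifting ρ : SL₂(ℤ) → GL_r(k) whose kernel is a congruence subgroup of level n. -/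
open Matrix

/-- The principal congruence subgroup `Γ(n)`, the kernel of reduction mod `n`. -/
def GammaSL (n : ℕ) : Subgroup (SpecialLinearGroup (Fin 2) ℤ) :=
  (SpecialLinearGroup.map (Int.castRingHom (ZMod n))).ker

/-- `L` is a congruence subgroup of level `n`: `n` is the least positive integer with
`Γ(n) ≤ L`. -/
def IsCongruenceLevel (L : Subgroup (SpecialLinearGroup (Fin 2) ℤ)) (n : ℕ) : Prop :=
  0 < n ∧ GammaSL n ≤ L ∧ ∀ m : ℕ, 0 < m → GammaSL m ≤ L → n ≤ m

/-!
Reduction `πₙ : SL₂(ℤ) → SL₂(ℤ/nℤ)` is surjective: a unimodular row mod `n` lifts, by prime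
avoidance, to a coprime pair of integers, which completes to a matrix of `SL₂(ℤ)`, and the second
row is then corrected by an elementary row operation. Hence homomorphisms out of `SL₂(ℤ/nℤ)` are
the homomorphisms out of `SL₂(ℤ)` that kill `Γ(n)`. A lift `f` of `ρ̄ₙ` gives the lift `f ∘ πₙ` of
`ρ̄`, whose kernel lies between `Γ(n)` and `ker ρ̄` and so has level `n`; conversely a lift of `ρ̄`
whose kernel contains `Γ(n)` factors through `πₙ`, and the factor lifts `ρ̄ₙ` since `πₙ` is onto.
-/

theorem Nat.exists_coprime_add_mul {a b n : ℕ} (hb : b ≠ 0)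
    (h : ∀ p, p.Prime → p ∣ a → p ∣ b → ¬ p ∣ n) : ∃ k, Coprime (a + k * n) b := by
  let ps : Finset ℕ := {p ∈ b.primeFactors | ¬ p ∣ a}
  refine ⟨ps.prod id, Nat.coprime_of_dvd fun p hp hpab hpb ↦ ?_⟩
  by_cases hpa : p ∣ a
  · have hpkn : p ∣ ps.prod id * n := (Nat.dvd_add_right hpa).mp hpab
    rcases hp.dvd_mul.mp hpkn with hpk | hpn
    · obtain ⟨q, hq, hpq⟩ := (hp.prime.dvd_finsetProd_iff id).mp hpk
      rw [Finset.mem_filter, Nat.mem_primeFactors] at hq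
      exact hq.2 ((Nat.prime_dvd_prime_iff_eq hp hq.1.1).mp hpq ▸ hpa)
    · exact h p hp hpa hpb hpn
  · have hps : p ∈ ps := Finset.mem_filter.mpr ⟨Nat.mem_primeFactors.mpr ⟨hp, hpb, hb⟩, hpa⟩
    exact hpa ((Nat.dvd_add_left ((Finset.dvd_prod_of_mem id hps).mul_right n)).mp hpab)

theorem ZMod.eq_one_of_isCoprime_of_dvd_val {n d : ℕ} [NeZero n] (hd : d ∣ n) {a b : ZMod n}
    (h : IsCoprime a b) (ha : d ∣ a.val) (hb : d ∣ b.val) : d = 1 := by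
  have h0 : ∀ x : ZMod n, d ∣ x.val → ZMod.castHom hd (ZMod d) x = 0 := fun x hx ↦ by
    rw [ZMod.castHom_apply, ← ZMod.natCast_val, ZMod.natCast_eq_zero_iff]
    exact hx
  have hd0 := h.map (ZMod.castHom hd (ZMod d))
  rw [h0 a ha, h0 b hb, isCoprime_zero_left, isUnit_zero_iff] at hd0
  by_contra hd1
  have := ZMod.nontrivial_iff.mpr hd1
  exact zero_ne_one hd0

theorem ZMod.exists_isCoprime_intCast_eq {n : ℕ} [NeZero n] {a b : ZMod n} (h : IsCoprime a b) :
    ∃ a' b' : ℤ, IsCoprime a' b' ∧ (a' : ZMod n) = a ∧ (b' : ZMod n) = b := by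
  obtain ⟨k, hk⟩ : ∃ k, Nat.Coprime (a.val + k * n) (b.val + n) := by
    refine Nat.exists_coprime_add_mul (by have := NeZero.ne n; omega) fun p hp hpa hpb hpn ↦ ?_
    have hpb' : p ∣ b.val := (Nat.dvd_add_left hpn).mp hpb
    exact hp.one_lt.ne' (ZMod.eq_one_of_isCoprime_of_dvd_val hpn h hpa hpb')
  refine ⟨(a.val + k * n : ℕ), (b.val + n : ℕ), Nat.isCoprime_iff_coprime.mpr hk, ?_, ?_⟩ <;>
    simp

theorem Matrix.SpecialLinearGroup.SL2_map_intCastRingHom_surjective (n : ℕ) [NeZero n] :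
    Function.Surjective
      (map (Int.castRingHom (ZMod n)) :
        SpecialLinearGroup (Fin 2) ℤ →* SpecialLinearGroup (Fin 2) (ZMod n)) := by
  intro A
  have hdet : A 0 0 * A 1 1 - A 0 1 * A 1 0 = 1 := by rw [← det_fin_two, A.det_coe]
  obtain ⟨a, b, ⟨u, v, huv⟩, ha, hb⟩ :=
    ZMod.exists_isCoprime_intCast_eq (a := A 0 0) (b := A 0 1)
      ⟨A 1 1, -A 1 0, by linear_combination hdet⟩
  -- `[a b; -v u] ∈ SL(2, ℤ)` has the right first row mod `n`; adding `t ≡ c u + d v` times the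
  -- first row to the second corrects the second row mod `n`.
  obtain ⟨t, ht⟩ : ∃ t : ℤ, (t : ZMod n) = A 1 0 * u + A 1 1 * v := ZMod.intCast_surjective _
  let B : SpecialLinearGroup (Fin 2) ℤ :=
    ⟨!![a, b; t * a - v, t * b + u], by rw [det_fin_two_of]; linear_combination huv⟩
  refine ⟨B, ?_⟩
  have huv' : (u : ZMod n) * A 0 0 + v * A 0 1 = 1 := by
    rw [← ha, ← hb]; exact_mod_cast congrArg (Int.cast : ℤ → ZMod n) huv
  ext i j
  rw [map_apply_coe, RingHom.mapMatrix_apply]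
  fin_cases i <;> fin_cases j <;>
    simp only [B, Fin.zero_eta, Fin.mk_one, Fin.isValue, map_apply, of_apply, cons_val',
      cons_val_zero, cons_val_one, cons_val_fin_one, Int.coe_castRingHom, Int.cast_add,
      Int.cast_sub, Int.cast_mul, ht, ha, hb]
  · linear_combination A 1 0 * huv' + (v : ZMod n) * hdet
  · linear_combination A 1 1 * huv' - (u : ZMod n) * hdet

theorem IsCongruenceLevel.of_le {L L' : Subgroup (SpecialLinearGroup (Fin 2) ℤ)} {n : ℕ}
    (hL' : IsCongruenceLevel L' n) (hLL' : L ≤ L') (hL : GammaSL n ≤ L) :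
    IsCongruenceLevel L n :=
  ⟨hL'.1, hL, fun m hm hm' ↦ hL'.2.2 m hm (hm'.trans hLL')⟩

theorem lifting_iff_level_n_general (k : Type) [Field k]
    (r : ℕ) (n : ℕ)
    (ρbar : SpecialLinearGroup (Fin 2) ℤ →* (GL (Fin r) k ⧸ Subgroup.center (GL (Fin r) k)))
    (hker : IsCongruenceLevel ρbar.ker n)
    (ρbarn : SpecialLinearGroup (Fin 2) (ZMod n) →*
      (GL (Fin r) k ⧸ Subgroup.center (GL (Fin r) k)))
    (hfac : ρbar = ρbarn.comp (SpecialLinearGroup.map (Int.castRingHom (ZMod n)))) :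
    (∃ f : SpecialLinearGroup (Fin 2) (ZMod n) →* GL (Fin r) k,
        (QuotientGroup.mk' (Subgroup.center (GL (Fin r) k))).comp f = ρbarn) ↔
    (∃ ρ : SpecialLinearGroup (Fin 2) ℤ →* GL (Fin r) k,
        (QuotientGroup.mk' (Subgroup.center (GL (Fin r) k))).comp ρ = ρbar ∧
        IsCongruenceLevel ρ.ker n) := by
  set π : SpecialLinearGroup (Fin 2) ℤ →* SpecialLinearGroup (Fin 2) (ZMod n) :=
    SpecialLinearGroup.map (Int.castRingHom (ZMod n))
  set η := QuotientGroup.mk' (Subgroup.center (GL (Fin r) k))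
  have : NeZero n := ⟨hker.1.ne'⟩
  have hπ : Function.Surjective π := SpecialLinearGroup.SL2_map_intCastRingHom_surjective n
  constructor
  · rintro ⟨f, rfl⟩
    have hρ : η.comp (f.comp π) = ρbar := by rw [hfac, MonoidHom.comp_assoc]
    refine ⟨f.comp π, hρ, hker.of_le ?_ ?_⟩
    · rw [← hρ, ← MonoidHom.comap_ker]
      exact (f.comp π).ker_le_comap η.ker
    · rw [← MonoidHom.comap_ker]
      exact π.ker_le_comap f.ker
  · rintro ⟨ρ, rfl, hρ⟩
    let f := π.liftOfSurjective hπ ⟨ρ, hρ.2.1⟩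
    have hf : f.comp π = ρ := π.liftOfRightInverse_comp _ _ _
    refine ⟨f, (MonoidHom.cancel_right hπ).mp ?_⟩
    rw [MonoidHom.comp_assoc, hf, hfac]

/-- Let `ρ̄ : SL₂(ℤ) → PGL_r(k)` be a projective representation whose kernel is a congruence
subgroup of level `n`, and let `ρ̄ₙ : SL₂(ℤ/nℤ) → PGL_r(k)` satisfy `ρ̄ = ρ̄ₙ ∘ πₙ`.  Then `ρ̄ₙ`
lifts to `GL_r(k)` iff `ρ̄` admits a lifting whose kernel is a congruence subgroup of
level `n`. -/
theorem lifting_iff_level_n (k : Type) [Field k] [IsAlgClosed k] [CharZero k]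
    (r : ℕ) (hr : 0 < r) (n : ℕ)
    (ρbar : SpecialLinearGroup (Fin 2) ℤ →* (GL (Fin r) k ⧸ Subgroup.center (GL (Fin r) k)))
    (hker : IsCongruenceLevel ρbar.ker n)
    (ρbarn : SpecialLinearGroup (Fin 2) (ZMod n) →*
      (GL (Fin r) k ⧸ Subgroup.center (GL (Fin r) k)))
    (hfac : ρbar = ρbarn.comp (SpecialLinearGroup.map (Int.castRingHom (ZMod n)))) :
    (∃ f : SpecialLinearGroup (Fin 2) (ZMod n) →* GL (Fin r) k,
        (QuotientGroup.mk' (Subgroup.center (GL (Fin r) k))).comp f = ρbarn) ↔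
    (∃ ρ : SpecialLinearGroup (Fin 2) ℤ →* GL (Fin r) k,
        (QuotientGroup.mk' (Subgroup.center (GL (Fin r) k))).comp ρ = ρbar ∧
        IsCongruenceLevel ρ.ker n) :=
  lifting_iff_level_n_general k r n ρbar hker ρbarn hfac
end

section
/- Let Π be a finite set with a distinguished element 0, an involution i ↦ i* on Π with 0* = 0, and nonnegative integers N_{ij}^k (for i, j, k ∈ Π) satisfying: N_{0j}^k = δ_{jk} (unit), N_{ij}^k = N_{ji}^k (commutativity), Σ_r N_{ij}^r N_{rk}^l = Σ_r N_{jk}^r N_{ir}^l for all i,j,k,l (associativity), N_{ij}^0 = δ_{i,j*} (duality), and N_{i*j*}^{k*} = N_{ij}^k. Suppose A is a complex symmetric matrix indexed by Π such that A_{0r} ≠ 0 for all r ∈ Π and A satisfies the Verlinde formula N_{ij}^k = Σ_{r∈Π} A_{ir} A_{jr} A_{k*r} / A_{0r} for all i, j, k ∈ Π. Then A_{0r} is real for all r ∈ Π, A² = C, and A is unitary, where C is the matrix with entries C_{ij} = δ_{i,j*}. -/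
open scoped BigOperators

/-- Let `(Π, 0, *, N)` be the fusion rules of a fusion category over `ℂ` with commutative
Grothendieck ring, and let `A` be a complex symmetric matrix indexed by `Π` with nonzero
row `A_{0·}` satisfying the Verlinde formula.  Then each `A_{0r}` is real, `A² = C` and
`A` is unitary, where `C_{ij} = δ_{i,j*}`. -/
theorem verlinde_implies_unitary
    (P : Type) [Fintype P] [DecidableEq P] (z : P) (st : P → P)
    (N : P → P → P → ℕ)
    (hinv : ∀ i, st (st i) = i) (hz : st z = z)
    (hunit : ∀ j k, N z j k = if j = k then 1 else 0)
    (hcomm : ∀ i j k, N i j k = N j i k)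
    (hassoc : ∀ i j k l, ∑ r, N i j r * N r k l = ∑ r, N j k r * N i r l)
    (hdual : ∀ i j, N i j z = if i = st j then 1 else 0)
    (hconj : ∀ i j k, N (st i) (st j) (st k) = N i j k)
    (A : Matrix P P ℂ) (hsym : A.IsSymm)
    (hA0 : ∀ r, A z r ≠ 0)
    (hVer : ∀ i j k, (N i j k : ℂ) = ∑ r, A i r * A j r * A (st k) r / A z r) :
    (∀ r, ∃ x : ℝ, A z r = (x : ℂ)) ∧
    A * A = Matrix.of (fun i j => if i = st j then (1 : ℂ) else 0) ∧
    A * A.conjTranspose = 1 := by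
  classical
  have hS : ∀ i j, A i j = A j i := fun i j => (hsym.apply i j).symm
  have hsum_st : ∀ f : P → ℂ, ∑ r, f (st r) = ∑ r, f r :=
    fun f => Equiv.sum_comp (Function.Involutive.toPerm st hinv) f
  have hstinj : ∀ {i j : P}, st i = st j → i = j := by
    intro i j h
    have := congrArg st h
    rwa [hinv, hinv] at this
  -- F1 : row orthogonality, twisted form
  have F1 : ∀ j k, ∑ r, A j r * A (st k) r = if j = k then (1 : ℂ) else 0 := by
    intro j k
    calc ∑ r, A j r * A (st k) r
        = ∑ r, A z r * A j r * A (st k) r / A z r := by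
          refine Finset.sum_congr rfl fun r _ => ?_
          rw [eq_div_iff (hA0 r)]; ring
      _ = ((N z j k : ℕ) : ℂ) := (hVer z j k).symm
      _ = if j = k then 1 else 0 := by rw [hunit]; split <;> simp
  have F2 : ∀ j k, ∑ r, A j r * A k r = if j = st k then (1 : ℂ) else 0 := by
    intro j k
    have := F1 j (st k)
    rwa [hinv k] at this
  have F4 : ∀ r s, ∑ k, A k r * A k s = if r = st s then (1 : ℂ) else 0 := by
    intro r s
    calc ∑ k, A k r * A k s = ∑ k, A r k * A s k := by
          refine Finset.sum_congr rfl fun k _ => by rw [hS k r, hS k s]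
      _ = if r = st s then 1 else 0 := F2 r s
  set Cm : Matrix P P ℂ := Matrix.of (fun i j => if i = st j then (1 : ℂ) else 0) with hCm
  -- A * A = Cm
  have hAA : A * A = Cm := by
    ext i j
    rw [Matrix.mul_apply]
    calc ∑ r, A i r * A r j = ∑ r, A i r * A j r := by
          refine Finset.sum_congr rfl fun r _ => by rw [hS r j]
      _ = if i = st j then 1 else 0 := F2 i j
  -- Cm * Cm = 1
  have hCC : Cm * Cm = 1 := by
    ext i j
    rw [Matrix.mul_apply, Matrix.one_apply]
    have hcond : ∀ k : P, (i = st k) ↔ (st i = k) := by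
      intro k
      constructor <;> intro h
      · rw [h, hinv]
      · rw [← h, hinv]
    calc ∑ k, Cm i k * Cm k j
        = ∑ k, if st i = k then (if k = st j then (1:ℂ) else 0) else 0 := by
          refine Finset.sum_congr rfl fun k _ => ?_
          simp only [hCm, Matrix.of_apply, hcond k, ite_mul, one_mul, zero_mul]
      _ = if st i = st j then (1:ℂ) else 0 := by
          rw [Finset.sum_ite_eq]
          simp
      _ = if i = j then 1 else 0 := by
          by_cases h : i = j
          · simp [h]
          · have : ¬ (st i = st j) := fun hc => h (hstinj hc)
            simp [h, this]
  have hACA : A * Cm * A = 1 := by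
    have h1 : A * Cm * A = A * A * (A * A) := by
      rw [← hAA]
      simp only [Matrix.mul_assoc]
    rw [h1, hAA, hCC]
  -- F5
  have F5 : ∀ r s, ∑ k, A (st k) r * A k s = if r = s then (1 : ℂ) else 0 := by
    intro r s
    have h : (A * Cm * A) r s = (1 : Matrix P P ℂ) r s := by rw [hACA]
    rw [Matrix.mul_apply, Matrix.one_apply] at h
    have hACm : ∀ k, (A * Cm) r k = A (st k) r := by
      intro k
      rw [Matrix.mul_apply]
      calc ∑ m, A r m * Cm m k = ∑ m, if m = st k then A r m else 0 := by
            refine Finset.sum_congr rfl fun m _ => ?_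
            simp only [hCm, Matrix.of_apply, mul_ite, mul_one, mul_zero]
        _ = A r (st k) := by rw [Finset.sum_ite_eq']; simp
        _ = A (st k) r := hS r (st k)
    calc ∑ k, A (st k) r * A k s = ∑ k, (A * Cm) r k * A k s := by
          refine Finset.sum_congr rfl fun k _ => by rw [hACm k]
      _ = if r = s then 1 else 0 := h
  -- F6 : character identity
  have F6 : ∀ i j s, ∑ k, (N i j k : ℂ) * A k s = A i s * A j s / A z s := by
    intro i j s
    calc ∑ k, (N i j k : ℂ) * A k s
        = ∑ k, (∑ r, A i r * A j r * A (st k) r / A z r) * A k s := by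
          refine Finset.sum_congr rfl fun k _ => by rw [hVer]
      _ = ∑ k, ∑ r, (A i r * A j r / A z r) * (A (st k) r * A k s) := by
          refine Finset.sum_congr rfl fun k _ => ?_
          rw [Finset.sum_mul]
          refine Finset.sum_congr rfl fun r _ => by ring
      _ = ∑ r, (A i r * A j r / A z r) * ∑ k, A (st k) r * A k s := by
          rw [Finset.sum_comm]
          refine Finset.sum_congr rfl fun r _ => (Finset.mul_sum _ _ _).symm
      _ = ∑ r, if r = s then A i r * A j r / A z r else 0 := by
          refine Finset.sum_congr rfl fun r _ => by rw [F5]; simp only [mul_ite, mul_one, mul_zero]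
      _ = A i s * A j s / A z s := by rw [Finset.sum_ite_eq']; simp
  have F6c : ∀ i j s, (∑ k, (N i j k : ℂ) * A k s) * A z s = A i s * A j s := by
    intro i j s
    rw [F6, div_mul_cancel₀ _ (hA0 s)]
  -- rigidity lemma
  have L : ∀ v : P → ℂ, v z ≠ 0 →
      (∀ i j, (∑ k, (N i j k : ℂ) * v k) * v z = v i * v j) →
      ∃ r, ∀ i, v i * A z r = v z * A i r := by
    intro v hvz hv
    set c : P → ℂ := fun r => ∑ k, A (st k) r * v k with hc
    have hexp : ∀ j, v j = ∑ r, c r * A j r := by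
      intro j
      symm
      calc ∑ r, c r * A j r = ∑ r, ∑ k, (A (st k) r * v k) * A j r := by
            refine Finset.sum_congr rfl fun r _ => ?_
            rw [hc]; exact Finset.sum_mul _ _ _
        _ = ∑ k, v k * ∑ r, A j r * A (st k) r := by
            rw [Finset.sum_comm]
            refine Finset.sum_congr rfl fun k _ => ?_
            rw [Finset.mul_sum]
            refine Finset.sum_congr rfl fun r _ => by ring
        _ = ∑ k, if j = k then v k else 0 := by
            refine Finset.sum_congr rfl fun k _ => by rw [F1]; simp only [mul_ite, mul_one, mul_zero, mul_comm]
        _ = v j := by rw [Finset.sum_ite_eq]; simp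
    have key : ∀ i j, ∑ r, (c r * (v z * A i r / A z r - v i)) * A j r = 0 := by
      intro i j
      have h1 : ∑ k, (N i j k : ℂ) * v k = ∑ r, c r * (A i r * A j r / A z r) := by
        calc ∑ k, (N i j k : ℂ) * v k
            = ∑ k, ∑ r, c r * ((N i j k : ℂ) * A k r) := by
              refine Finset.sum_congr rfl fun k _ => ?_
              rw [hexp k, Finset.mul_sum]
              refine Finset.sum_congr rfl fun r _ => by ring
          _ = ∑ r, c r * ∑ k, (N i j k : ℂ) * A k r := by
              rw [Finset.sum_comm]
              refine Finset.sum_congr rfl fun r _ => (Finset.mul_sum _ _ _).symm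
          _ = ∑ r, c r * (A i r * A j r / A z r) := by
              refine Finset.sum_congr rfl fun r _ => by rw [F6]
      have h2 := hv i j
      rw [h1] at h2
      have expand : ∑ r, (c r * (v z * A i r / A z r - v i)) * A j r
          = (∑ r, c r * (A i r * A j r / A z r)) * v z - v i * (∑ r, c r * A j r) := by
        rw [Finset.sum_mul, Finset.mul_sum, ← Finset.sum_sub_distrib]
        refine Finset.sum_congr rfl fun r _ => by ring
      rw [expand, h2, ← hexp j]
      ring
    have key2 : ∀ i s, c s * (v z * A i s / A z s - v i) = 0 := by
      intro i s
      have h3 : ∑ j, (∑ r, (c r * (v z * A i r / A z r - v i)) * A j r) * A (st j) s = 0 := by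
        simp only [key i, zero_mul, Finset.sum_const_zero]
      calc c s * (v z * A i s / A z s - v i)
          = ∑ r, if s = r then c r * (v z * A i r / A z r - v i) else 0 := by
            rw [Finset.sum_ite_eq]; simp
        _ = ∑ r, (c r * (v z * A i r / A z r - v i)) * ∑ j, A (st j) s * A j r := by
            refine Finset.sum_congr rfl fun r _ => ?_
            rw [F5 s r, mul_ite, mul_one, mul_zero]
        _ = ∑ r, ∑ j, (c r * (v z * A i r / A z r - v i)) * A j r * A (st j) s := by
            refine Finset.sum_congr rfl fun r _ => ?_
            rw [Finset.mul_sum]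
            refine Finset.sum_congr rfl fun j _ => by ring
        _ = ∑ j, ∑ r, (c r * (v z * A i r / A z r - v i)) * A j r * A (st j) s :=
            Finset.sum_comm
        _ = ∑ j, (∑ r, (c r * (v z * A i r / A z r - v i)) * A j r) * A (st j) s := by
            refine Finset.sum_congr rfl fun j _ => (Finset.sum_mul _ _ _).symm
        _ = 0 := h3
    have hex : ∃ s, c s ≠ 0 := by
      by_contra h
      push_neg at h
      apply hvz
      rw [hexp z]
      simp [h]
    obtain ⟨s, hs⟩ := hex
    refine ⟨s, fun i => ?_⟩
    have h5 : v z * A i s / A z s - v i = 0 := by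
      rcases mul_eq_zero.1 (key2 i s) with h | h
      · exact absurd h hs
      · exact h
    have h6 : v z * A i s / A z s = v i := by linear_combination h5
    rw [← h6, div_mul_cancel₀ _ (hA0 s)]
    -- Step 9: A (st i) s = A i (st s), A z (st s) = A z s
  have step9 : ∀ s, A z (st s) = A z s ∧ ∀ i, A (st i) s = A i (st s) := by
    intro s
    have hvz : A (st z) s ≠ 0 := by rw [hz]; exact hA0 s
    have hv : ∀ i j, (∑ k, (N i j k : ℂ) * A (st k) s) * A (st z) s
        = A (st i) s * A (st j) s := by
      intro i j
      have h1 : ∑ k, (N i j k : ℂ) * A (st k) s = ∑ k, (N (st i) (st j) k : ℂ) * A k s := by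
        calc ∑ k, (N i j k : ℂ) * A (st k) s
            = ∑ k, (N (st i) (st j) (st k) : ℂ) * A (st k) s := by
              refine Finset.sum_congr rfl fun k _ => by rw [hconj]
          _ = ∑ k, (N (st i) (st j) k : ℂ) * A k s :=
              hsum_st (fun k => (N (st i) (st j) k : ℂ) * A k s)
      rw [h1, hz]
      exact F6c (st i) (st j) s
    obtain ⟨r, hr⟩ := L (fun k => A (st k) s) hvz hv
    simp only [hz] at hr
    have h2 : A z r = A z s * (if r = st s then 1 else 0) := by
      calc A z r = (∑ k, A (st k) s * A k s) * A z r := by rw [F5 s s]; simp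
        _ = ∑ k, (A (st k) s * A z r) * A k s := by
            rw [Finset.sum_mul]
            refine Finset.sum_congr rfl fun k _ => by ring
        _ = ∑ k, (A z s * A k r) * A k s := by
            refine Finset.sum_congr rfl fun k _ => by rw [hr k]
        _ = A z s * ∑ k, A k r * A k s := by
            rw [Finset.mul_sum]
            refine Finset.sum_congr rfl fun k _ => by ring
        _ = A z s * (if r = st s then 1 else 0) := by rw [F4]
    have hrs : r = st s := by
      by_cases h : r = st s
      · exact h
      · rw [if_neg h, mul_zero] at h2
        exact absurd h2 (hA0 r)
    subst hrs
    rw [if_pos rfl, mul_one] at h2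
    refine ⟨h2, fun i => ?_⟩
    have h3 := hr i
    rw [h2, mul_comm] at h3
    exact mul_left_cancel₀ (hA0 s) h3
  have hzst : ∀ s, A z (st s) = A z s := fun s => (step9 s).1
  have F10 : ∀ i s, A (st i) s = A i (st s) := fun i s => (step9 s).2 i
  -- Step 10: conjugates
  have step10 : ∀ s, ((starRingEnd ℂ) (A z s) = A z s) ∧
      ∀ i, (starRingEnd ℂ) (A i s) = A i (st s) := by
    intro s
    have hvz : (starRingEnd ℂ) (A z s) ≠ 0 := by
      intro h
      apply hA0 s
      have := congrArg (starRingEnd ℂ) h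
      simpa using this
    have hv : ∀ i j, (∑ k, (N i j k : ℂ) * (starRingEnd ℂ) (A k s)) * (starRingEnd ℂ) (A z s)
        = (starRingEnd ℂ) (A i s) * (starRingEnd ℂ) (A j s) := by
      intro i j
      have h0 := congrArg (starRingEnd ℂ) (F6c i j s)
      simpa [map_sum, map_mul, Complex.conj_natCast] using h0
    obtain ⟨r, hr⟩ := L (fun k => (starRingEnd ℂ) (A k s)) hvz hv
    set T : ℝ := ∑ k, Complex.normSq (A k s) with hT
    have hTpos : 0 < T := by
      have h1 : Complex.normSq (A z s) ≤ T :=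
        Finset.single_le_sum (fun k _ => Complex.normSq_nonneg (A k s)) (Finset.mem_univ z)
      have h2 : 0 < Complex.normSq (A z s) := Complex.normSq_pos.2 (hA0 s)
      linarith
    have hTc : (T : ℂ) = ∑ k, (starRingEnd ℂ) (A k s) * A k s := by
      rw [hT]
      push_cast
      refine Finset.sum_congr rfl fun k _ => Complex.normSq_eq_conj_mul_self
    have h3 : (T : ℂ) * A z r = (starRingEnd ℂ) (A z s) * (if r = st s then 1 else 0) := by
      calc (T : ℂ) * A z r
          = ∑ k, ((starRingEnd ℂ) (A k s) * A z r) * A k s := by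
            rw [hTc, Finset.sum_mul]
            refine Finset.sum_congr rfl fun k _ => by ring
        _ = ∑ k, ((starRingEnd ℂ) (A z s) * A k r) * A k s := by
            refine Finset.sum_congr rfl fun k _ => by rw [hr k]
        _ = (starRingEnd ℂ) (A z s) * ∑ k, A k r * A k s := by
            rw [Finset.mul_sum]
            refine Finset.sum_congr rfl fun k _ => by ring
        _ = _ := by rw [F4]
    have hTne : (T : ℂ) ≠ 0 := by exact_mod_cast hTpos.ne'
    have hrs : r = st s := by
      by_cases h : r = st s
      · exact h
      · rw [if_neg h, mul_zero] at h3
        rcases mul_eq_zero.1 h3 with h' | h'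
        · exact absurd h' hTne
        · exact absurd h' (hA0 r)
    subst hrs
    rw [if_pos rfl, mul_one, hzst s] at h3
    -- h3 : (T:ℂ) * A z s = conj (A z s)
    have hT1 : T = 1 := by
      have h4 := congrArg Complex.normSq h3
      rw [Complex.normSq_mul, Complex.normSq_conj, Complex.normSq_ofReal] at h4
      have h5 : Complex.normSq (A z s) ≠ 0 := (Complex.normSq_pos.2 (hA0 s)).ne'
      have h6 : T * T = 1 := by
        have h7 : (T * T) * Complex.normSq (A z s) = 1 * Complex.normSq (A z s) := by
          rw [one_mul]; exact h4
        exact mul_right_cancel₀ h5 h7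
      rcases mul_self_eq_one_iff.1 h6 with h | h
      · exact h
      · linarith
    have hconjz : (starRingEnd ℂ) (A z s) = A z s := by
      rw [← h3, hT1]
      simp
    refine ⟨hconjz, fun i => ?_⟩
    have h7 := hr i
    rw [hzst s, hconjz] at h7
    rw [mul_comm ((starRingEnd ℂ) (A i s)) (A z s)] at h7
    exact mul_left_cancel₀ (hA0 s) h7
  have hzreal : ∀ s, (starRingEnd ℂ) (A z s) = A z s := fun s => (step10 s).1
  have F11 : ∀ i s, (starRingEnd ℂ) (A i s) = A i (st s) := fun i s => (step10 s).2 i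
  refine ⟨fun r => Complex.conj_eq_iff_real.1 (hzreal r), hAA, ?_⟩
  ext i j
  rw [Matrix.mul_apply, Matrix.one_apply]
  calc ∑ r, A i r * A.conjTranspose r j
      = ∑ r, A i r * A j (st r) := by
        refine Finset.sum_congr rfl fun r _ => ?_
        rw [Matrix.conjTranspose_apply, ← starRingEnd_apply, F11]
    _ = ∑ r, A i (st r) * A j r := by
        rw [← hsum_st (fun r => A i (st r) * A j r)]
        refine Finset.sum_congr rfl fun r _ => by rw [hinv]
    _ = ∑ r, A (st i) r * A j r := by
        refine Finset.sum_congr rfl fun r _ => by rw [← F10 i r]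
    _ = if st i = st j then 1 else 0 := F2 (st i) j
    _ = if i = j then 1 else 0 := by
        by_cases h : i = j
        · simp [h]
        · have hne : ¬ st i = st j := fun hc => h (hstinj hc)
          simp [h, hne]
end

section
/- Let H be a normal subgroup of SL₂(ℤ) which is a congruence subgroup of level m. Then m equals the order of the coset 𝔱H in the quotient group SL₂(ℤ)/H, where 𝔱 = [[1,1],[0,1]]. -/
/-!
Let `d` be the order of `𝔱H`. As `𝔱^m ∈ Γ(m) ≤ H`, `d ∣ m`, so it suffices to show `Γ(d) ≤ H`.
By normality `H` contains `𝔱^x` and `U(x) = [[1, 0], [x, 1]] = S 𝔱^(-x) S⁻¹` whenever `d ∣ x`.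
Left multiplication by these is a row operation by multiples of `d`, and three of them bring any
`A = [[a, b], [c, e]] ∈ Γ(d)` to a matrix that is diagonal modulo `m`; the first one needs
`a + d c s` to be a unit modulo `m` for some `s`, which holds because `a` and `d c` are coprime.
Finally, a matrix in `Γ(d)` that is `diag(u, v)` modulo `m` is congruent modulo `m`, hence modulo
`Γ(m) ≤ H`, to `𝔱^u U(-v) 𝔱^u S`, and modulo `H` this is `𝔱 U(-1) 𝔱 S = S⁻¹ S = 1`.
-/

open Matrix

open MatrixGroups ModularGroup

instance (n : ℕ) : (GammaSL n).Normal := MonoidHom.normal_ker _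

lemma mem_gammaSL_iff {n : ℕ} {A : SL(2, ℤ)} :
    A ∈ GammaSL n ↔ (n : ℤ) ∣ A 0 0 - 1 ∧ (n : ℤ) ∣ A 0 1 ∧ (n : ℤ) ∣ A 1 0 ∧
      (n : ℤ) ∣ A 1 1 - 1 := by
  simp only [← ZMod.intCast_zmod_eq_zero_iff_dvd, Int.cast_sub, Int.cast_one, sub_eq_zero]
  exact CongruenceSubgroup.Gamma_mem

lemma Matrix.SpecialLinearGroup.det_fin_two_eq_one {R : Type*} [CommRing R] (A : SL(2, R)) :
    A 0 0 * A 1 1 - A 0 1 * A 1 0 = 1 := by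
  rw [← det_fin_two, A.det_coe]

lemma T_zpow_mem_gammaSL (n : ℕ) : T ^ (n : ℤ) ∈ GammaSL n := by
  have h := CongruenceSubgroup.ModularGroup_T_pow_mem_Gamma n n dvd_rfl
  rwa [Int.natAbs_natCast] at h

def lowerUnipotent (x : ℤ) : SL(2, ℤ) := ⟨!![1, 0; x, 1], by simp [det_fin_two_of]⟩

@[simp]
lemma coe_lowerUnipotent (x : ℤ) :
    (lowerUnipotent x : Matrix (Fin 2) (Fin 2) ℤ) = !![1, 0; x, 1] :=
  rfl

lemma lowerUnipotent_eq_S_mul_T_zpow_mul_S_inv (x : ℤ) :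
    lowerUnipotent x = S * T ^ (-x) * S⁻¹ := by
  ext i j
  fin_cases i <;> fin_cases j <;>
    simp [coe_S, coe_T_zpow, mul_apply, Fin.sum_univ_two, adjugate_fin_two]

lemma T_mul_lowerUnipotent_neg_one_mul_T : T * lowerUnipotent (-1) * T = S⁻¹ := by
  ext i j
  fin_cases i <;> fin_cases j <;>
    simp [coe_S, coe_T, mul_apply, Fin.sum_univ_two, adjugate_fin_two]

section Unipotents

variable {H : Subgroup SL(2, ℤ)} {d x : ℤ}

lemma T_zpow_mem_of_dvd (hT : T ^ d ∈ H) (hx : d ∣ x) : T ^ x ∈ H := by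
  obtain ⟨k, rfl⟩ := hx
  rw [_root_.zpow_mul]
  exact H.zpow_mem hT k

lemma lowerUnipotent_mem_of_dvd [hH : H.Normal] (hT : T ^ d ∈ H) (hx : d ∣ x) :
    lowerUnipotent x ∈ H := by
  rw [lowerUnipotent_eq_S_mul_T_zpow_mul_S_inv]
  exact hH.conj_mem _ (T_zpow_mem_of_dvd hT (dvd_neg.mpr hx)) S

end Unipotents

lemma mem_of_intCast_apply_eq {H : Subgroup SL(2, ℤ)} {m : ℕ} (hΓ : GammaSL m ≤ H)
    {X P : SL(2, ℤ)} (hXP : ∀ i j, (X i j : ZMod m) = P i j) (hP : P ∈ H) : X ∈ H := by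
  have hPX : P⁻¹ * X ∈ GammaSL m := by
    rw [GammaSL, MonoidHom.mem_ker, map_mul, map_inv, inv_mul_eq_one]
    ext i j
    exact (hXP i j).symm
  simpa using H.mul_mem hP (hΓ hPX)

lemma exists_isCoprime_add_mul {n : ℕ} (hn : n ≠ 0) {a b : ℤ} (hab : IsCoprime a b) :
    ∃ s : ℤ, IsCoprime (a + b * s) n := by
  induction n using Nat.recOnPosPrimePosCoprime with
  | zero => exact absurd rfl hn
  | one => exact ⟨0, by simp [isCoprime_one_right]⟩
  | prime_pow p k hp _ =>
    have hpZ : Prime (p : ℤ) := Nat.prime_iff_prime_int.mp hp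
    suffices ∃ s, ¬ (p : ℤ) ∣ a + b * s by
      obtain ⟨s, hs⟩ := this
      exact ⟨s, by push_cast; exact (hpZ.coprime_iff_not_dvd.mpr hs).pow_left.symm⟩
    by_cases hpa : (p : ℤ) ∣ a
    · refine ⟨1, fun h => hpZ.not_isUnit (hab.isUnit_of_dvd' hpa ?_)⟩
      simpa using (dvd_add_right hpa).mp h
    · exact ⟨0, by simpa using hpa⟩
  | coprime u v hu hv huv ihu ihv =>
    obtain ⟨s₁, h₁⟩ := ihu (by omega)
    obtain ⟨s₂, h₂⟩ := ihv (by omega)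
    obtain ⟨x, y, hxy⟩ := Nat.isCoprime_iff_coprime.mpr huv
    -- Chinese remainder theorem: the witness is `≡ s₁ [ZMOD u]` and `≡ s₂ [ZMOD v]`.
    refine ⟨s₁ * y * v + s₂ * x * u, ?_⟩
    have e₁ : a + b * (s₁ * y * v + s₂ * x * u) = a + b * s₁ + b * x * (s₂ - s₁) * u := by
      linear_combination b * s₁ * hxy
    have e₂ : a + b * (s₁ * y * v + s₂ * x * u) = a + b * s₂ + b * y * (s₁ - s₂) * v := by
      linear_combination b * s₂ * hxy
    push_cast
    exact IsCoprime.mul_right (e₁ ▸ h₁.add_mul_right_left _) (e₂ ▸ h₂.add_mul_right_left _)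

lemma exists_dvd_and_intCast_add_mul_eq_zero {m : ℕ} {d c a : ℤ} (hc : d ∣ c)
    (ha : IsUnit (a : ZMod m)) : ∃ x, d ∣ x ∧ ((c + x * a : ℤ) : ZMod m) = 0 := by
  obtain ⟨c₀, rfl⟩ := hc
  obtain ⟨t, ht⟩ := ZMod.intCast_surjective (-(c₀ : ZMod m) * ((ha.unit⁻¹ : (ZMod m)ˣ) : ZMod m))
  refine ⟨d * t, dvd_mul_right _ _, ?_⟩
  push_cast
  rw [ht]
  linear_combination (-(d : ZMod m) * c₀) * ha.val_inv_mul

section RowReduction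

variable {d m : ℕ} {A : SL(2, ℤ)}

lemma exists_T_zpow_mul_isUnit (hm : m ≠ 0) (hA : A ∈ GammaSL d) :
    ∃ x : ℤ, (d : ℤ) ∣ x ∧ IsUnit (((T ^ x * A) 0 0 : ℤ) : ZMod m) := by
  obtain ⟨⟨k, hk⟩, -, -, -⟩ := mem_gammaSL_iff.mp hA
  have had : IsCoprime (A 0 0) d := ⟨1, -k, by linear_combination hk⟩
  have hac : IsCoprime (A 0 0) (A 1 0) :=
    ⟨A 1 1, -A 0 1, by linear_combination A.det_fin_two_eq_one⟩
  obtain ⟨s, hs⟩ := exists_isCoprime_add_mul hm (had.mul_right hac)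
  refine ⟨d * s, dvd_mul_right _ _, ?_⟩
  have h00 : (T ^ (d * s) * A) 0 0 = A 0 0 + d * A 1 0 * s := by
    simp [coe_T_zpow, mul_apply, Fin.sum_univ_two]
    ring
  rw [ZMod.coe_int_isUnit_iff_isCoprime, h00]
  exact hs.symm

lemma exists_lowerUnipotent_mul_eq_zero (hA : A ∈ GammaSL d) (ha : IsUnit (A 0 0 : ZMod m)) :
    ∃ x : ℤ, (d : ℤ) ∣ x ∧ ((lowerUnipotent x * A) 1 0 : ZMod m) = 0 := by
  obtain ⟨-, -, h10, -⟩ := mem_gammaSL_iff.mp hA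
  obtain ⟨x, hx, hzero⟩ := exists_dvd_and_intCast_add_mul_eq_zero h10 ha
  refine ⟨x, hx, ?_⟩
  simpa [mul_apply, Fin.sum_univ_two, add_comm] using hzero

lemma exists_T_zpow_mul_eq_zero (hA : A ∈ GammaSL d) (h10 : (A 1 0 : ZMod m) = 0) :
    ∃ x : ℤ, (d : ℤ) ∣ x ∧ ((T ^ x * A) 0 1 : ZMod m) = 0 ∧ ((T ^ x * A) 1 0 : ZMod m) = 0 := by
  obtain ⟨-, h01, -, -⟩ := mem_gammaSL_iff.mp hA
  have hdet := (SpecialLinearGroup.map (Int.castRingHom (ZMod m)) A).det_fin_two_eq_one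
  simp only [SL_reduction_mod_hom_val, h10, mul_zero, sub_zero] at hdet
  obtain ⟨x, hx, hzero⟩ :=
    exists_dvd_and_intCast_add_mul_eq_zero h01 (IsUnit.of_mul_eq_one_right _ hdet)
  refine ⟨x, hx, ?_, ?_⟩
  · simpa [coe_T_zpow, mul_apply, Fin.sum_univ_two] using hzero
  · simpa [coe_T_zpow, mul_apply, Fin.sum_univ_two] using h10

end RowReduction

section Level

variable {H : Subgroup SL(2, ℤ)} [H.Normal] {d m : ℕ}

lemma mem_of_mem_gammaSL_of_offDiag_eq_zero (hΓ : GammaSL m ≤ H) (hT : T ^ (d : ℤ) ∈ H)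
    {X : SL(2, ℤ)} (hX : X ∈ GammaSL d) (h01 : (X 0 1 : ZMod m) = 0)
    (h10 : (X 1 0 : ZMod m) = 0) : X ∈ H := by
  obtain ⟨hu, -, -, hv⟩ := mem_gammaSL_iff.mp hX
  have huv : (X 0 0 : ZMod m) * X 1 1 = 1 := by
    have hdet := (SpecialLinearGroup.map (Int.castRingHom (ZMod m)) X).det_fin_two_eq_one
    simpa only [SL_reduction_mod_hom_val, h10, mul_zero, sub_zero] using hdet
  -- With `u = X 0 0`, `v = X 1 1`: `P = T^u U(-v) T^u S ≡ diag(u, v) ≡ X` mod `m`, and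
  -- `P ≡ T U(-1) T S = 1` mod `H`.
  refine mem_of_intCast_apply_eq hΓ
    (P := T ^ X 0 0 * lowerUnipotent (-X 1 1) * T ^ X 0 0 * S) ?_ ?_
  · intro i j
    fin_cases i <;> fin_cases j <;> simp [coe_T_zpow, coe_S, mul_apply, Fin.sum_univ_two]
    · linear_combination -(X 0 0 : ZMod m) * huv
    · linear_combination h01 - huv
    · linear_combination h10 + huv
  · have hTu : ((T ^ X 0 0 : SL(2, ℤ)) : SL(2, ℤ) ⧸ H) = T := by
      rw [QuotientGroup.eq, ← _root_.zpow_neg, ← _root_.zpow_add_one, neg_add_eq_sub]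
      exact T_zpow_mem_of_dvd hT (dvd_sub_comm.mp hu)
    have hU : (lowerUnipotent (-X 1 1) : SL(2, ℤ) ⧸ H) = lowerUnipotent (-1) := by
      rw [QuotientGroup.eq, show (lowerUnipotent (-X 1 1))⁻¹ * lowerUnipotent (-1) =
        lowerUnipotent (X 1 1 - 1) by simp only [lowerUnipotent_eq_S_mul_T_zpow_mul_S_inv]; group]
      exact lowerUnipotent_mem_of_dvd hT hv
    rw [← QuotientGroup.eq_one_iff]
    calc ((T ^ X 0 0 * lowerUnipotent (-X 1 1) * T ^ X 0 0 * S : SL(2, ℤ)) : SL(2, ℤ) ⧸ H)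
        = ((T * lowerUnipotent (-1) * T * S : SL(2, ℤ)) : SL(2, ℤ) ⧸ H) := by
          simp only [QuotientGroup.mk_mul, hTu, hU]
      _ = 1 := by rw [T_mul_lowerUnipotent_neg_one_mul_T, inv_mul_cancel, QuotientGroup.mk_one]

theorem gammaSL_le_of_T_zpow_mem (hm : m ≠ 0) (hΓ : GammaSL m ≤ H) (hT : T ^ (d : ℤ) ∈ H) :
    GammaSL d ≤ H := by
  intro A hA
  have hTΓ := T_zpow_mem_gammaSL d
  obtain ⟨x, hx, hunit⟩ := exists_T_zpow_mul_isUnit hm hA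
  have hA₁ : T ^ x * A ∈ GammaSL d := mul_mem (T_zpow_mem_of_dvd hTΓ hx) hA
  obtain ⟨y, hy, h10⟩ := exists_lowerUnipotent_mul_eq_zero hA₁ hunit
  have hA₂ : lowerUnipotent y * (T ^ x * A) ∈ GammaSL d :=
    mul_mem (lowerUnipotent_mem_of_dvd hTΓ hy) hA₁
  obtain ⟨z, hz, h01, h10'⟩ := exists_T_zpow_mul_eq_zero hA₂ h10
  have hA₃ := mem_of_mem_gammaSL_of_offDiag_eq_zero hΓ hT
    (mul_mem (T_zpow_mem_of_dvd hTΓ hz) hA₂) h01 h10'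
  rwa [H.mul_mem_cancel_left (T_zpow_mem_of_dvd hT hz),
    H.mul_mem_cancel_left (lowerUnipotent_mem_of_dvd hT hy),
    H.mul_mem_cancel_left (T_zpow_mem_of_dvd hT hx)] at hA₃

end Level

/-- If `H` is a normal congruence subgroup of `SL₂(ℤ)` of level `m`, then `m` is the
order of the coset `𝔱H` in `SL₂(ℤ)/H`. -/
theorem level_eq_orderOf_t (H : Subgroup (SpecialLinearGroup (Fin 2) ℤ)) [H.Normal]
    (m : ℕ) (hH : IsCongruenceLevel H m) :
    m = orderOf (QuotientGroup.mk ModularGroup.T : SpecialLinearGroup (Fin 2) ℤ ⧸ H) := by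
  obtain ⟨hm, hΓ, hmin⟩ := hH
  have hTm : (QuotientGroup.mk T : SL(2, ℤ) ⧸ H) ^ m = 1 := by
    rw [← QuotientGroup.mk_pow, QuotientGroup.eq_one_iff, ← zpow_natCast]
    exact hΓ (T_zpow_mem_gammaSL m)
  have hdvd := orderOf_dvd_of_pow_eq_one hTm
  have hTd : T ^ (orderOf (QuotientGroup.mk T : SL(2, ℤ) ⧸ H) : ℤ) ∈ H := by
    rw [zpow_natCast, ← QuotientGroup.eq_one_iff, QuotientGroup.mk_pow, pow_orderOf_eq_one]
  exact le_antisymm (hmin _ (Nat.pos_of_dvd_of_pos hdvd hm)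
    (gammaSL_le_of_T_zpow_mem hm.ne' hΓ hTd)) (Nat.le_of_dvd hm hdvd)
end

section
/- Let ζ be a primitive m-th root of unity in a field of characteristic zero (for some positive integer m). Then σ(σ(ζ)) = ζ for every element σ of the Galois group Gal(ℚ(ζ)/ℚ) if, and only if, ζ²⁴ = 1 (equivalently, m divides 24). -/
/-!
The cyclotomic character identifies `Gal(ℚ(ζ)/ℚ)` with `(ℤ/mℤ)ˣ`, and since `ζ` generates
`ℚ(ζ)`, `σ(σ(ζ)) = ζ` says exactly that `σ² = 1`. So the condition is that every unit of
`ℤ/mℤ` squares to `1`, which happens exactly for `m ∣ 24`.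
-/

open Polynomial

namespace ZMod

theorem units_pow_eq_one_of_dvd {m n k : ℕ} [NeZero m] (hnm : n ∣ m)
    (H : ∀ a : (ZMod m)ˣ, a ^ k = 1) (b : (ZMod n)ˣ) : b ^ k = 1 := by
  obtain ⟨a, rfl⟩ := unitsMap_surjective hnm b
  rw [← map_pow, H a, map_one]

/-- If `5 ∤ m`, squaring the unit `5` gives `25 = 1` in `ZMod m`, i.e. `m ∣ 24`; and `5 ∣ m`
is impossible since `2² ≠ 1` modulo `5`. -/
theorem forall_units_sq_eq_one_iff_dvd_24 {m : ℕ} [NeZero m] :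
    (∀ a : (ZMod m)ˣ, a ^ 2 = 1) ↔ m ∣ 24 := by
  refine ⟨fun H => ?_, fun h => units_pow_eq_one_of_dvd h (by decide)⟩
  by_cases h5 : 5 ∣ m
  · exact absurd (units_pow_eq_one_of_dvd h5 H) (by decide)
  have hcop : Nat.Coprime 5 m := (Nat.Prime.coprime_iff_not_dvd (by norm_num)).2 h5
  have h25 : ((5 : ℕ) : ZMod m) ^ 2 = 1 := by
    simpa using congrArg Units.val (H (unitOfCoprime 5 hcop))
  refine (natCast_eq_zero_iff 24 m).1 ?_
  push_cast at h25 ⊢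
  linear_combination h25

end ZMod

section Cyclotomic

variable {K L : Type*} [Field K] [CommRing L] [IsDomain L] [Algebra K L] {n : ℕ} [NeZero n]
  [IsCyclotomicExtension {n} K L] {μ : L}

theorem IsPrimitiveRoot.algEquiv_apply_eq_self_iff (hμ : IsPrimitiveRoot μ n)
    (σ : L ≃ₐ[K] L) : σ μ = μ ↔ σ = 1 := by
  refine ⟨fun h => AlgEquiv.coe_toAlgHom_injective ?_, fun h => h ▸ rfl⟩
  exact (hμ.powerBasis K).algHom_ext (by simpa using h)

theorem IsCyclotomicExtension.forall_apply_apply_eq_self_iff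
    (hirr : Irreducible (cyclotomic n K)) (hμ : IsPrimitiveRoot μ n) :
    (∀ σ : L ≃ₐ[K] L, σ (σ μ) = μ) ↔ ∀ a : (ZMod n)ˣ, a ^ 2 = 1 := by
  set e := autEquivPow L hirr
  have key (σ : L ≃ₐ[K] L) : σ (σ μ) = μ ↔ e σ ^ 2 = 1 := by
    rw [← map_pow, MulEquiv.map_eq_one_iff, ← hμ.algEquiv_apply_eq_self_iff, sq]
    rfl
  refine ⟨fun H a => ?_, fun H σ => (key σ).2 (H _)⟩
  simpa using (key (e.symm a)).1 (H _)

end Cyclotomic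

theorem IsPrimitiveRoot.adjoin_simple_isCyclotomicExtension
    {F E : Type*} [Field F] [Field E] [Algebra F E] {n : ℕ} [NeZero n] {ζ : E}
    (hζ : IsPrimitiveRoot ζ n) :
    IsCyclotomicExtension {n} F (IntermediateField.adjoin F {ζ}) := by
  change IsCyclotomicExtension {n} F (IntermediateField.adjoin F {ζ}).toSubalgebra
  have hint : IsIntegral F ζ := (hζ.isIntegral (NeZero.pos n)).tower_top
  rw [IntermediateField.adjoin_simple_toSubalgebra_of_isAlgebraic hint.isAlgebraic]
  exact hζ.adjoin_isCyclotomicExtension F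

/-- For a primitive `m`-th root of unity `ζ` in a characteristic-zero field, one has
`σ(σ(ζ)) = ζ` for every `σ ∈ Gal(ℚ(ζ)/ℚ)` if and only if `ζ²⁴ = 1`, equivalently `m ∣ 24`. -/
theorem sq_galois_fixes_primitive_root_iff
    (K : Type) [Field K] [CharZero K] (m : ℕ) (hm : 0 < m)
    (ζ : K) (hζ : IsPrimitiveRoot ζ m) :
    ((∀ σ : (IntermediateField.adjoin ℚ {ζ}) ≃ₐ[ℚ] (IntermediateField.adjoin ℚ {ζ}),
        σ (σ ⟨ζ, IntermediateField.subset_adjoin ℚ {ζ} rfl⟩) =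
          ⟨ζ, IntermediateField.subset_adjoin ℚ {ζ} rfl⟩) ↔ ζ ^ 24 = 1) ∧
    (ζ ^ 24 = 1 ↔ m ∣ 24) := by
  have : NeZero m := ⟨hm.ne'⟩
  have h24 : ζ ^ 24 = 1 ↔ m ∣ 24 := hζ.pow_eq_one_iff_dvd 24
  refine ⟨?_, h24⟩
  have : IsCyclotomicExtension {m} ℚ (IntermediateField.adjoin ℚ {ζ}) :=
    hζ.adjoin_simple_isCyclotomicExtension
  rw [h24, ← ZMod.forall_units_sq_eq_one_iff_dvd_24]
  exact IsCyclotomicExtension.forall_apply_apply_eq_self_iff (cyclotomic.irreducible_rat hm)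
    (IsPrimitiveRoot.coe_submonoidClass_iff.mp hζ)
end

section
/- Let k be a positive divisor of a positive integer n. Suppose that for every integer a relatively prime to n with a ≡ 1 (mod k), one has a² ≡ 1 (mod n). Then gcd(n/k, k) divides 2, n/k divides 24, and φ(n)/φ(k) divides 8, where φ denotes Euler's totient function. -/
/-!
By the Chinese remainder theorem the hypothesis localises: for every prime `p`, every `u`
prime to `p` with `u ≡ 1 (mod p^{v_p(k)})` satisfies `u² ≡ 1 (mod p^{v_p(n)})`. Testing
`u = 2`, `u = 3` and `u = 1 + p^{v_p(k)}` bounds `v_p(n/k)`, and shows that `m = n/k` and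
`g = gcd(m, k)` satisfy `g ∣ 2` and `m g ∣ 24`. As `φ(g) = 1`, the identity
`φ(g) φ(k m) = φ(k) φ(m) g` gives `φ(n) / φ(k) = φ(m g)`, a divisor of `φ(24) = 8`.
-/

open scoped Nat

-- The kernel of the reduction map `(ℤ/nℤ)ˣ → (ℤ/kℤ)ˣ` has exponent dividing `2`.
def ReductionKernelSqEqOne (n k : ℕ) : Prop :=
  ∀ a : ℤ, Int.gcd a (n : ℤ) = 1 → a ≡ 1 [ZMOD (k : ℤ)] → a ^ 2 ≡ 1 [ZMOD (n : ℤ)]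

theorem Int.exists_modEq_and_modEq {m n : ℤ} (h : IsCoprime m n) (u v : ℤ) :
    ∃ a, a ≡ u [ZMOD m] ∧ a ≡ v [ZMOD n] := by
  obtain ⟨x, y, hxy⟩ := h
  refine ⟨u * y * n + v * x * m, (Int.modEq_iff_dvd.2 ⟨x * (v - u), ?_⟩).symm,
    (Int.modEq_iff_dvd.2 ⟨y * (u - v), ?_⟩).symm⟩
  · linear_combination u * hxy
  · linear_combination v * hxy

theorem Int.ModEq.isCoprime_iff {n a b : ℤ} (h : a ≡ b [ZMOD n]) :
    IsCoprime a n ↔ IsCoprime b n := by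
  rw [Int.isCoprime_iff_gcd_eq_one, Int.isCoprime_iff_gcd_eq_one, ← Int.gcd_emod, h,
    Int.gcd_emod]

theorem Prime.le_of_pow_dvd_pow_mul {M : Type*} [CommMonoidWithZero M] [IsCancelMulZero M]
    {p c : M} (hp : Prime p) (hc : ¬p ∣ c) {a b : ℕ} (h : p ^ a ∣ p ^ b * c) : a ≤ b :=
  (pow_dvd_pow_iff hp.ne_zero hp.not_isUnit).1 (hp.pow_dvd_of_dvd_mul_right a hc h)

theorem Nat.dvd_of_forall_prime_pow_factorization_dvd {a b : ℕ} (ha : a ≠ 0) (hb : b ≠ 0)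
    (h : ∀ p, p.Prime → p ^ a.factorization p ∣ b) : a ∣ b :=
  (Nat.factorization_prime_le_iff_dvd ha hb).1 fun p hp =>
    (hp.pow_dvd_iff_le_factorization hb).1 (h p hp)

theorem Nat.factorization_gcd_apply {a b : ℕ} (ha : a ≠ 0) (hb : b ≠ 0) (p : ℕ) :
    (Nat.gcd a b).factorization p = min (a.factorization p) (b.factorization p) := by
  rw [Nat.factorization_gcd ha hb, Finsupp.inf_apply]

theorem Nat.totient_mul_eq_totient_mul_totient_mul_gcd {k m : ℕ} (hg : φ (Nat.gcd m k) = 1) :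
    φ (k * m) = φ k * φ (m * Nat.gcd m k) := by
  have hkm := Nat.totient_gcd_mul_totient_mul k m
  have hmg := Nat.totient_gcd_mul_totient_mul m (Nat.gcd m k)
  rw [Nat.gcd_comm k m, hg, one_mul] at hkm
  rw [Nat.gcd_eq_right (Nat.gcd_dvd_left m k), hg, one_mul, mul_one] at hmg
  rw [hkm, hmg, mul_assoc]

namespace ReductionKernelSqEqOne

variable {n k m : ℕ}

theorem sq_modEq_one_of_modEq_one (h : ReductionKernelSqEqOne n k) (hn : n ≠ 0) (hkn : k ∣ n)
    {p : ℕ} (hp : p.Prime) {u : ℤ} (hu : IsCoprime u p)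
    (huk : u ≡ 1 [ZMOD p ^ k.factorization p]) : u ^ 2 ≡ 1 [ZMOD p ^ n.factorization p] := by
  set e := n.factorization p
  set q := ordCompl[p] n
  have hcop : IsCoprime ((p : ℤ) ^ e) q := by
    exact_mod_cast Nat.isCoprime_iff_coprime.2 ((Nat.coprime_ordCompl hp hn).pow_left e)
  have hn_eq : (n : ℤ) = p ^ e * q := by
    exact_mod_cast (Nat.ordProj_mul_ordCompl_eq_self n p).symm
  obtain ⟨a, hau, ha1⟩ := Int.exists_modEq_and_modEq hcop u 1
  have ha_cop : Int.gcd a n = 1 := by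
    rw [← Int.isCoprime_iff_gcd_eq_one, hn_eq]
    exact (hau.isCoprime_iff.2 hu.pow_right).mul_right (ha1.isCoprime_iff.2 isCoprime_one_left)
  have hak : a ≡ 1 [ZMOD k] := by
    have hfe : k.factorization p ≤ e :=
      (Nat.factorization_le_iff_dvd (ne_zero_of_dvd_ne_zero hn hkn) hn).2 hkn p
    have hap : a ≡ 1 [ZMOD p ^ k.factorization p] :=
      (hau.of_dvd (pow_dvd_pow _ hfe)).trans huk
    have hk_dvd : k ∣ p ^ k.factorization p * q := by
      conv_lhs => rw [← Nat.ordProj_mul_ordCompl_eq_self k p]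
      exact mul_dvd_mul_left _ (Nat.ordCompl_dvd_ordCompl_of_dvd hkn p)
    have hcop' : ((p : ℤ) ^ k.factorization p).natAbs.Coprime (q : ℤ).natAbs := by
      simpa [Int.natAbs_pow] using (Nat.coprime_ordCompl hp hn).pow_left (k.factorization p)
    exact ((Int.modEq_and_modEq_iff_modEq_mul hcop').1 ⟨hap, ha1⟩).of_dvd
      (by exact_mod_cast hk_dvd)
  have han : a ^ 2 ≡ 1 [ZMOD p ^ e] := (h a ha_cop hak).of_dvd (hn_eq ▸ dvd_mul_right _ _)
  exact (hau.pow 2).symm.trans han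

theorem pow_add_dvd_sq_sub_one (h : ReductionKernelSqEqOne (k * m) k) (hk : k ≠ 0) (hm : m ≠ 0)
    {p : ℕ} (hp : p.Prime) (u : ℤ) (hu : IsCoprime u p)
    (huk : u ≡ 1 [ZMOD p ^ k.factorization p]) :
    (p : ℤ) ^ (k.factorization p + m.factorization p) ∣ u ^ 2 - 1 := by
  have := h.sq_modEq_one_of_modEq_one (mul_ne_zero hk hm) (dvd_mul_right k m) hp hu huk
  rw [Nat.factorization_mul hk hm, Finsupp.add_apply] at this
  exact this.symm.dvd

theorem pow_add_dvd_pow_mul_two_add_pow (h : ReductionKernelSqEqOne (k * m) k) (hk : k ≠ 0)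
    (hm : m ≠ 0) {p : ℕ} (hp : p.Prime) (hf : k.factorization p ≠ 0) :
    (p : ℤ) ^ (k.factorization p + m.factorization p) ∣
      p ^ k.factorization p * (2 + p ^ k.factorization p) := by
  have huk : 1 + (p : ℤ) ^ k.factorization p ≡ 1 [ZMOD p ^ k.factorization p] := by
    simp [Int.ModEq]
  have hu : IsCoprime (1 + (p : ℤ) ^ k.factorization p) p :=
    (huk.of_dvd (dvd_pow_self _ hf)).isCoprime_iff.2 isCoprime_one_left
  convert h.pow_add_dvd_sq_sub_one hk hm hp _ hu huk using 1
  ring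

theorem min_factorization_eq_zero_and_pow_dvd_three (h : ReductionKernelSqEqOne (k * m) k)
    (hk : k ≠ 0) (hm : m ≠ 0) {p : ℕ} (hp : p.Prime) (hp2 : p ≠ 2) :
    min (m.factorization p) (k.factorization p) = 0 ∧ p ^ m.factorization p ∣ 3 := by
  rcases Nat.eq_zero_or_pos (k.factorization p) with hf | hf
  · have h2p : IsCoprime (2 : ℤ) p := by
      exact_mod_cast
        Nat.isCoprime_iff_coprime.2 ((Nat.coprime_primes Nat.prime_two hp).2 hp2.symm)
    have h3 := h.pow_add_dvd_sq_sub_one hk hm hp 2 h2p (by rw [hf, pow_zero]; exact Int.modEq_one)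
    norm_num [hf] at h3
    exact ⟨by rw [hf, min_zero], by exact_mod_cast h3⟩
  · have hp2' : ¬(p : ℤ) ∣ 2 + p ^ k.factorization p := by
      rw [dvd_add_left (dvd_pow_self _ hf.ne')]
      exact fun h2 =>
        hp2 ((Nat.prime_dvd_prime_iff_eq hp Nat.prime_two).1 (by exact_mod_cast h2))
    have hd := (Nat.prime_iff_prime_int.1 hp).le_of_pow_dvd_pow_mul hp2'
      (h.pow_add_dvd_pow_mul_two_add_pow hk hm hp hf.ne')
    have hd0 : m.factorization p = 0 := by omega
    simp [hd0]

theorem min_factorization_two_le_one_and_add_le_three (h : ReductionKernelSqEqOne (k * m) k)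
    (hk : k ≠ 0) (hm : m ≠ 0) :
    min (m.factorization 2) (k.factorization 2) ≤ 1 ∧
      m.factorization 2 + min (m.factorization 2) (k.factorization 2) ≤ 3 := by
  have h2 : Prime (2 : ℤ) := Int.prime_two
  rcases le_or_gt (k.factorization 2) 1 with hf | hf
  · have huk : (3 : ℤ) ≡ 1 [ZMOD 2 ^ k.factorization 2] :=
      Int.ModEq.of_dvd (pow_dvd_pow 2 hf) (by norm_num [Int.ModEq])
    have h8 := h.pow_add_dvd_sq_sub_one hk hm Nat.prime_two 3 (by norm_num) huk
    have : k.factorization 2 + m.factorization 2 ≤ 3 :=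
      h2.le_of_pow_dvd_pow_mul (c := 1) (by norm_num) (by simpa using h8)
    omega
  · obtain ⟨j, hj⟩ : ∃ j, k.factorization 2 = j + 2 := ⟨_, (Nat.sub_add_cancel hf).symm⟩
    have hdvd := h.pow_add_dvd_pow_mul_two_add_pow hk hm Nat.prime_two (by omega)
    rw [hj, Nat.cast_ofNat,
      show (2 : ℤ) ^ (j + 2) * (2 + 2 ^ (j + 2)) = 2 ^ (j + 3) * (1 + 2 ^ (j + 1)) by ring]
      at hdvd
    have hodd : ¬(2 : ℤ) ∣ 1 + 2 ^ (j + 1) := by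
      rw [dvd_add_left (dvd_pow_self 2 j.succ_ne_zero)]
      norm_num
    have := h2.le_of_pow_dvd_pow_mul hodd hdvd
    omega

theorem pow_min_factorization_dvd_two_and_24 (h : ReductionKernelSqEqOne (k * m) k)
    (hk : k ≠ 0) (hm : m ≠ 0) {p : ℕ} (hp : p.Prime) :
    p ^ min (m.factorization p) (k.factorization p) ∣ 2 ∧
      p ^ (m.factorization p + min (m.factorization p) (k.factorization p)) ∣ 24 := by
  obtain rfl | hp2 := eq_or_ne p 2
  · obtain ⟨h1, h3⟩ := h.min_factorization_two_le_one_and_add_le_three hk hm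
    exact ⟨(pow_dvd_pow 2 h1).trans (by norm_num), (pow_dvd_pow 2 h3).trans (by norm_num)⟩
  · obtain ⟨h0, h3⟩ := h.min_factorization_eq_zero_and_pow_dvd_three hk hm hp hp2
    rw [h0, pow_zero, add_zero]
    exact ⟨one_dvd 2, h3.trans (by norm_num)⟩

theorem gcd_dvd_two (h : ReductionKernelSqEqOne (k * m) k) (hk : k ≠ 0) (hm : m ≠ 0) :
    Nat.gcd m k ∣ 2 :=
  Nat.dvd_of_forall_prime_pow_factorization_dvd (Nat.gcd_ne_zero_left hm) two_ne_zero
    fun p hp => by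
      rw [Nat.factorization_gcd_apply hm hk]
      exact (h.pow_min_factorization_dvd_two_and_24 hk hm hp).1

theorem mul_gcd_dvd_24 (h : ReductionKernelSqEqOne (k * m) k) (hk : k ≠ 0) (hm : m ≠ 0) :
    m * Nat.gcd m k ∣ 24 := by
  have hg : Nat.gcd m k ≠ 0 := Nat.gcd_ne_zero_left hm
  refine Nat.dvd_of_forall_prime_pow_factorization_dvd (mul_ne_zero hm hg) (by norm_num)
    fun p hp => ?_
  rw [Nat.factorization_mul hm hg, Finsupp.add_apply, Nat.factorization_gcd_apply hm hk]
  exact (h.pow_min_factorization_dvd_two_and_24 hk hm hp).2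

end ReductionKernelSqEqOne

theorem totient_quotient_dvd_general (n k : ℕ) (hn : 0 < n) (hkn : k ∣ n)
    (h : ∀ a : ℤ, Int.gcd a (n : ℤ) = 1 → a ≡ 1 [ZMOD (k : ℤ)] → a ^ 2 ≡ 1 [ZMOD (n : ℤ)]) :
    Nat.gcd (n / k) k ∣ 2 ∧ (n / k) ∣ 24 ∧ (Nat.totient n / Nat.totient k) ∣ 8 := by
  obtain ⟨m, rfl⟩ := hkn
  have hk : 0 < k := Nat.pos_of_mul_pos_right hn
  have hm : m ≠ 0 := (Nat.pos_of_mul_pos_left hn).ne'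
  rw [Nat.mul_div_cancel_left m hk]
  have hg := ReductionKernelSqEqOne.gcd_dvd_two h hk.ne' hm
  have h24 := ReductionKernelSqEqOne.mul_gcd_dvd_24 h hk.ne' hm
  have hφg : φ (Nat.gcd m k) = 1 := Nat.totient_eq_one_iff.2 ((Nat.dvd_prime Nat.prime_two).1 hg)
  refine ⟨hg, dvd_of_mul_right_dvd h24, ?_⟩
  rw [Nat.totient_mul_eq_totient_mul_totient_mul_gcd hφg,
    Nat.mul_div_cancel_left _ (Nat.totient_pos.2 hk)]
  exact (Nat.totient_dvd_of_dvd h24).trans (by decide)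

/-- Let `k` be a positive divisor of a positive integer `n` such that every integer `a`
coprime to `n` with `a ≡ 1 (mod k)` satisfies `a² ≡ 1 (mod n)`.  Then `gcd(n/k, k) ∣ 2`,
`n/k ∣ 24` and `φ(n)/φ(k) ∣ 8`. -/
theorem totient_quotient_dvd (n k : ℕ) (hn : 0 < n) (hk : 0 < k) (hkn : k ∣ n)
    (h : ∀ a : ℤ, Int.gcd a (n : ℤ) = 1 → a ≡ 1 [ZMOD (k : ℤ)] → a ^ 2 ≡ 1 [ZMOD (n : ℤ)]) :
    Nat.gcd (n / k) k ∣ 2 ∧ (n / k) ∣ 24 ∧ (Nat.totient n / Nat.totient k) ∣ 8 :=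
  totient_quotient_dvd_general n k hn hkn h
end
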